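/- arXiv:2509.08921 — 3 statements merged into one kernel-verified Lean document; each statement's English description precedes it below -/
import Mathlib

section
/- Per-level Fock evaluation bound: Let d, n, m ≥ 1, X = (X_1,…,X_d) ∈ (ℂ^{mn×mn})^d, x, u ∈ ℂ^m, 1 ≤ i, j ≤ n, and set y := x⊗e_i, v := u⊗e_j ∈ ℂ^{mn} ≅ ℂ^m⊗ℂ^n. Then for every ℓ ≥ 0, the sum over all words ω of length ℓ over {1,…,d} and all words α, β of length ℓ+1 over {1,…,n} of |y^* (E_{α,β}⋆e_ω)(X) v|² is at most n^ℓ · ‖X‖_col^{2ℓ} · ‖x‖² · ‖u‖². -/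
set_option synthInstance.maxHeartbeats 1000000
set_option maxHeartbeats 1000000

noncomputable section
namespace MC

/-- Projection onto the `p`-th summand of the Hilbert direct sum of copies of `E`. -/
def projL (ι : Type*) [Fintype ι] (E : Type*) [NormedAddCommGroup E] [InnerProductSpace ℂ E]
    (p : ι) : PiLp 2 (fun _ : ι => E) →L[ℂ] E :=
  PiLp.proj 2 (fun _ : ι => E) p

/-- Inclusion of the `p`-th summand into the Hilbert direct sum of copies of `E`. -/
def inclL (ι : Type*) [Fintype ι] [DecidableEq ι] (E : Type*) [NormedAddCommGroup E]
    [InnerProductSpace ℂ E] (p : ι) : E →L[ℂ] PiLp 2 (fun _ : ι => E) :=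
  (PiLp.continuousLinearEquiv 2 ℂ (fun _ : ι => E)).symm.toContinuousLinearMap.comp
    (ContinuousLinearMap.pi (fun q => if q = p then ContinuousLinearMap.id ℂ E else 0))

variable {E : Type*} [NormedAddCommGroup E] [InnerProductSpace ℂ E]

instance piLpCompleteSpace {ι : Type*} [Fintype ι] [CompleteSpace E] :
    CompleteSpace (PiLp 2 (fun _ : ι => E)) :=
  inferInstance

/-- The `(p,q)` block (an `ν × ν` matrix) of a block matrix indexed by `μ × ν`. -/
def blk {μ ν : Type*} (Z : Matrix (μ × ν) (μ × ν) ℂ) (p q : μ) : Matrix ν ν ℂ :=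
  Matrix.of fun i j => Z (p, i) (q, j)

/-- The ampliation `(id_μ ⊗ A)(Z)` of a map `A : ℂ^{ν×ν} → B(E)` applied to a block
matrix `Z`, acting on the Hilbert direct sum `ℂ^μ ⊗ E`. -/
def amp {μ ν : Type*} [Fintype μ] [DecidableEq μ]
    (A : Matrix ν ν ℂ → (E →L[ℂ] E)) (Z : Matrix (μ × ν) (μ × ν) ℂ) :
    PiLp 2 (fun _ : μ => E) →L[ℂ] PiLp 2 (fun _ : μ => E) :=
  ∑ p, ∑ q, (inclL μ E p).comp ((A (blk Z p q)).comp (projL μ E q))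

/-- The linear pencil `L_A(X) = I - Σ_j (id_μ ⊗ A_j)(X_j)`. -/
def pencil {d : ℕ} {μ ν : Type*} [Fintype μ] [DecidableEq μ]
    (A : Fin d → Matrix ν ν ℂ → (E →L[ℂ] E)) (X : Fin d → Matrix (μ × ν) (μ × ν) ℂ) :
    PiLp 2 (fun _ : μ => E) →L[ℂ] PiLp 2 (fun _ : μ => E) :=
  1 - ∑ j, amp (A j) (X j)

/-- `I_μ ⊗ Y` as a block matrix. -/
def oneKron (μ : Type*) [DecidableEq μ] {ν : Type*} (Y : Matrix ν ν ℂ) :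
    Matrix (μ × ν) (μ × ν) ℂ :=
  Matrix.of fun p q => if p.1 = q.1 then Y p.2 q.2 else 0

/-- Restriction `ℂ^{μ×ν} → ℂ^ν` onto the `p`-th slot. -/
def restrL (μ ν : Type*) [Fintype μ] [Fintype ν] [DecidableEq ν] (p : μ) :
    EuclideanSpace ℂ (μ × ν) →L[ℂ] EuclideanSpace ℂ ν :=
  ∑ i : ν, (EuclideanSpace.proj ((p, i) : μ × ν)).smulRight (EuclideanSpace.single i (1 : ℂ))

/-- The ampliation `I_μ ⊗ b : ℂ^{μ×ν} → ℂ^μ ⊗ E` of `b : ℂ^ν → E`. -/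
def ampVec {μ ν : Type*} [Fintype μ] [DecidableEq μ] [Fintype ν] [DecidableEq ν]
    (b : EuclideanSpace ℂ ν →L[ℂ] E) :
    EuclideanSpace ℂ (μ × ν) →L[ℂ] PiLp 2 (fun _ : μ => E) :=
  ∑ p : μ, (inclL μ E p).comp (b.comp (restrL μ ν p))

/-- The quantized transfer function
`f(X) = (I_μ⊗b)^* L_A(X - I_μ⊗Y)^{-1} (I_μ⊗c)` of a matrix-centre realization,
as an operator on `ℂ^{μ×ν}`. -/
def transfer {d : ℕ} {μ ν : Type*} [Fintype μ] [DecidableEq μ] [Fintype ν] [DecidableEq ν]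
    [CompleteSpace E]
    (A : Fin d → Matrix ν ν ℂ → (E →L[ℂ] E))
    (b c : EuclideanSpace ℂ ν →L[ℂ] E) (Y : Fin d → Matrix ν ν ℂ)
    (X : Fin d → Matrix (μ × ν) (μ × ν) ℂ) :
    EuclideanSpace ℂ (μ × ν) →L[ℂ] EuclideanSpace ℂ (μ × ν) :=
  (ContinuousLinearMap.adjoint (ampVec (μ := μ) b)).comp
    ((Ring.inverse (pencil A (fun j => X j - oneKron μ (Y j)))).comp (ampVec c))

/-- The column norm of a `d`-tuple of matrices: the operator norm of the column
`(X_1; …; X_d)`. -/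
def colNorm {d : ℕ} {ι : Type*} [Fintype ι] [DecidableEq ι] (X : Fin d → Matrix ι ι ℂ) : ℝ :=
  ‖LinearMap.toContinuousLinearMap
      (Matrix.toEuclideanLin
        (Matrix.of fun (pq : Fin d × ι) (r : ι) => X pq.1 pq.2 r))‖

/-- The word operator `A^ω(G_1,…,G_ℓ) = A_{i_1}(G_1) ⋯ A_{i_ℓ}(G_ℓ)`, encoded by the
list `[(i_1,G_1),…,(i_ℓ,G_ℓ)]`; the empty word gives the identity. -/
def wordOp {d : ℕ} {ν : Type*}
    (A : Fin d → Matrix ν ν ℂ → (E →L[ℂ] E)) :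
    List (Fin d × Matrix ν ν ℂ) → (E →L[ℂ] E)
  | [] => 1
  | g :: t => (A g.1 g.2) * wordOp A t

/-- The adjoint word operator `A^{ω;†}(G_1,…,G_ℓ) = A_{i_ℓ}(G_ℓ^*)^* ⋯ A_{i_1}(G_1^*)^*`. -/
def wordOpDag {d : ℕ} {ν : Type*} [CompleteSpace E]
    (A : Fin d → Matrix ν ν ℂ → (E →L[ℂ] E))
    (l : List (Fin d × Matrix ν ν ℂ)) : E →L[ℂ] E :=
  ContinuousLinearMap.adjoint (wordOp A (l.map fun g => (g.1, g.2.conjTranspose)))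

/-- The controllable subspace `C_{A,c}`. -/
def ctrlSpace {d : ℕ} {ν : Type*} [Fintype ν]
    (A : Fin d → Matrix ν ν ℂ → (E →L[ℂ] E))
    (c : EuclideanSpace ℂ ν →L[ℂ] E) : Submodule ℂ E :=
  (Submodule.span ℂ {x : E | ∃ l v, x = wordOp A l (c v)}).topologicalClosure

/-- The observable subspace `O_{A†,b}`. -/
def obsSpace {d : ℕ} {ν : Type*} [Fintype ν] [CompleteSpace E]
    (A : Fin d → Matrix ν ν ℂ → (E →L[ℂ] E))
    (b : EuclideanSpace ℂ ν →L[ℂ] E) : Submodule ℂ E :=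
  (Submodule.span ℂ {x : E | ∃ l u, x = wordOpDag A l (b u)}).topologicalClosure

/-- Minimality: controllable and observable. -/
def Minimal {d : ℕ} {ν : Type*} [Fintype ν] [CompleteSpace E]
    (A : Fin d → Matrix ν ν ℂ → (E →L[ℂ] E))
    (b c : EuclideanSpace ℂ ν →L[ℂ] E) : Prop :=
  ctrlSpace A c = ⊤ ∧ obsSpace A b = ⊤

/-- Two matrix-centre realizations at the same centre `Y` are analytically equivalent at `Y`
if on some uniform column-ball about `Y` both pencils are invertible and the quantized
transfer functions agree. -/
def AnalyticEquiv {d n : ℕ} {E F : Type*}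
    [NormedAddCommGroup E] [InnerProductSpace ℂ E] [CompleteSpace E]
    [NormedAddCommGroup F] [InnerProductSpace ℂ F] [CompleteSpace F]
    (A : Fin d → Matrix (Fin n) (Fin n) ℂ → (E →L[ℂ] E))
    (b c : EuclideanSpace ℂ (Fin n) →L[ℂ] E)
    (A' : Fin d → Matrix (Fin n) (Fin n) ℂ → (F →L[ℂ] F))
    (b' c' : EuclideanSpace ℂ (Fin n) →L[ℂ] F)
    (Y : Fin d → Matrix (Fin n) (Fin n) ℂ) : Prop :=
  ∃ r > 0, ∀ m : ℕ, 0 < m → ∀ X : Fin d → Matrix (Fin m × Fin n) (Fin m × Fin n) ℂ,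
    colNorm (fun j => X j - oneKron (Fin m) (Y j)) < r →
      IsUnit (pencil A fun j => X j - oneKron (Fin m) (Y j)) ∧
      IsUnit (pencil A' fun j => X j - oneKron (Fin m) (Y j)) ∧
      transfer A b c Y X = transfer A' b' c' Y X

/-- Evaluation `(E_{α,β} ⋆ e_ω)(X) = (I_m⊗E_{a_0,b_0}) X_{w_1} (I_m⊗E_{a_1,b_1}) ⋯
X_{w_ℓ} (I_m⊗E_{a_ℓ,b_ℓ})` of a matricial Fock-space basis vector at a matrix tuple. -/
def fockEval {d m n : ℕ} (X : Fin d → Matrix (Fin m × Fin n) (Fin m × Fin n) ℂ) {ℓ : ℕ}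
    (α β : Fin (ℓ + 1) → Fin n) (ω : Fin ℓ → Fin d) :
    Matrix (Fin m × Fin n) (Fin m × Fin n) ℂ :=
  oneKron (Fin m) (Matrix.single (α 0) (β 0) (1 : ℂ)) *
    ((List.finRange ℓ).map (fun t =>
      X (ω t) * oneKron (Fin m) (Matrix.single (α t.succ) (β t.succ) (1 : ℂ)))).prod

lemma finRange_concat (ℓ : ℕ) :
    List.finRange (ℓ+1) = (List.finRange ℓ).map Fin.castSucc ++ [Fin.last ℓ] := by
  rw [← List.ofFn_id, List.ofFn_succ', List.ofFn_eq_map, List.concat_eq_append]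
  simp

lemma fockEval_snoc {d m n : ℕ} (X : Fin d → Matrix (Fin m × Fin n) (Fin m × Fin n) ℂ) {ℓ : ℕ}
    (α β : Fin (ℓ + 1 + 1) → Fin n) (ω : Fin (ℓ + 1) → Fin d) :
    fockEval X α β ω =
      fockEval X (Fin.init α) (Fin.init β) (Fin.init ω) *
        (X (ω (Fin.last ℓ)) *
          oneKron (Fin m)
            (Matrix.single (α (Fin.last (ℓ+1))) (β (Fin.last (ℓ+1))) (1 : ℂ))) := by
  unfold fockEval
  rw [finRange_concat, List.map_append, List.prod_append, List.map_map,
    List.map_singleton, List.prod_singleton, ← mul_assoc]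
  have h1 : (Fin.last ℓ).succ = Fin.last (ℓ+1) := Fin.succ_last ℓ
  rw [h1]
  congr 2

lemma oneKron_std_mulVec {m n : ℕ} (a b : Fin n) (v : Fin m × Fin n → ℂ) (pc : Fin m × Fin n) :
    (oneKron (Fin m) (Matrix.single a b 1)).mulVec v pc
      = if pc.2 = a then v (pc.1, b) else 0 := by
  obtain ⟨p, c⟩ := pc
  simp [oneKron, Matrix.mulVec, dotProduct, Matrix.single,
    Fintype.sum_prod_type, ite_and, eq_comm]

lemma col_bound {d m n : ℕ} (X : Fin d → Matrix (Fin m × Fin n) (Fin m × Fin n) ℂ)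
    (z : Fin m × Fin n → ℂ) :
    ∑ w : Fin d, ∑ pa : Fin m × Fin n, ‖(X w).mulVec z pa‖ ^ 2 ≤
      colNorm X ^ 2 * ∑ pa : Fin m × Fin n, ‖z pa‖ ^ 2 := by
  set L := LinearMap.toContinuousLinearMap
      (Matrix.toEuclideanLin
        (Matrix.of fun (pq : Fin d × (Fin m × Fin n)) (r : Fin m × Fin n) => X pq.1 pq.2 r))
    with hLdef
  set z' : EuclideanSpace ℂ (Fin m × Fin n) := (WithLp.equiv 2 _).symm z with hz'
  have h := L.le_opNorm z'
  have hz : ‖z'‖ ^ 2 = ∑ pa : Fin m × Fin n, ‖z pa‖ ^ 2 := by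
    rw [EuclideanSpace.norm_eq, Real.sq_sqrt (by positivity)]
    rfl
  have hL : ‖L z'‖ ^ 2 = ∑ w : Fin d, ∑ pa : Fin m × Fin n, ‖(X w).mulVec z pa‖ ^ 2 := by
    rw [EuclideanSpace.norm_eq, Real.sq_sqrt (by positivity), Fintype.sum_prod_type]
    rfl
  calc ∑ w : Fin d, ∑ pa : Fin m × Fin n, ‖(X w).mulVec z pa‖ ^ 2 = ‖L z'‖ ^ 2 := hL.symm
    _ ≤ (‖L‖ * ‖z'‖) ^ 2 := pow_le_pow_left₀ (norm_nonneg _) h 2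
    _ = colNorm X ^ 2 * ∑ pa : Fin m × Fin n, ‖z pa‖ ^ 2 := by rw [mul_pow, hz]; rfl

lemma sum_snoc {κ : Type*} [Fintype κ] {ℓ : ℕ} (F : (Fin (ℓ+1) → κ) → ℝ) :
    ∑ g : Fin (ℓ+1) → κ, F g = ∑ a : κ, ∑ g : Fin ℓ → κ, F (Fin.snoc g a) := by
  calc ∑ g, F g = ∑ p : κ × (Fin ℓ → κ), F (Fin.snoc p.2 p.1) :=
        (Fintype.sum_equiv (Fin.snocEquiv fun _ => κ) _ F fun p => rfl).symm
    _ = ∑ a, ∑ g, F (Fin.snoc g a) := Fintype.sum_prod_type _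

lemma sum_P {m n : ℕ} (a b : Fin n) (v : Fin m × Fin n → ℂ) :
    ∑ pa : Fin m × Fin n,
        ‖(oneKron (Fin m) (Matrix.single a b 1)).mulVec v pa‖ ^ 2
      = ∑ p : Fin m, ‖v (p, b)‖ ^ 2 := by
  simp only [oneKron_std_mulVec, Fintype.sum_prod_type,
    apply_ite (fun z : ℂ => ‖z‖ ^ 2), norm_zero]
  simp [Finset.sum_ite_eq']

lemma sum_rearrange {d n : ℕ} {ℓ : ℕ}
    (f : (Fin (ℓ+1) → Fin d) → (Fin (ℓ+2) → Fin n) → (Fin (ℓ+2) → Fin n) → ℝ) :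
    ∑ ω : Fin (ℓ+1) → Fin d, ∑ α : Fin (ℓ+2) → Fin n, ∑ β : Fin (ℓ+2) → Fin n, f ω α β
      = ∑ w : Fin d, ∑ a : Fin n, ∑ b : Fin n,
          ∑ ω' : Fin ℓ → Fin d, ∑ α' : Fin (ℓ+1) → Fin n, ∑ β' : Fin (ℓ+1) → Fin n,
          f (Fin.snoc ω' w) (Fin.snoc α' a) (Fin.snoc β' b) := by
  rw [sum_snoc]
  refine Finset.sum_congr rfl fun w _ => ?_
  have h1 : ∀ ω' : Fin ℓ → Fin d,
      (∑ α : Fin (ℓ+2) → Fin n, ∑ β : Fin (ℓ+2) → Fin n, f (Fin.snoc ω' w) α β)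
        = ∑ a : Fin n, ∑ b : Fin n, ∑ α' : Fin (ℓ+1) → Fin n, ∑ β' : Fin (ℓ+1) → Fin n,
            f (Fin.snoc ω' w) (Fin.snoc α' a) (Fin.snoc β' b) := by
    intro ω'
    rw [sum_snoc]
    refine Finset.sum_congr rfl fun a _ => ?_
    have h2 : ∀ α' : Fin (ℓ+1) → Fin n,
        (∑ β : Fin (ℓ+2) → Fin n, f (Fin.snoc ω' w) (Fin.snoc α' a) β)
          = ∑ b : Fin n, ∑ β' : Fin (ℓ+1) → Fin n,
              f (Fin.snoc ω' w) (Fin.snoc α' a) (Fin.snoc β' b) := fun α' => sum_snoc _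
    rw [Finset.sum_congr rfl fun α' _ => h2 α']
    exact Finset.sum_comm
  rw [Finset.sum_congr rfl fun ω' _ => h1 ω', Finset.sum_comm]
  exact Finset.sum_congr rfl fun a _ => Finset.sum_comm

lemma main_bound {d m n : ℕ} (X : Fin d → Matrix (Fin m × Fin n) (Fin m × Fin n) ℂ) (ℓ : ℕ) :
    ∀ (y v : Fin m × Fin n → ℂ),
    ∑ ω : Fin ℓ → Fin d, ∑ α : Fin (ℓ+1) → Fin n, ∑ β : Fin (ℓ+1) → Fin n,
      ‖dotProduct (star y) ((fockEval X α β ω).mulVec v)‖ ^ 2 ≤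
    (n : ℝ) ^ ℓ * colNorm X ^ (2*ℓ) * (∑ pa, ‖y pa‖^2) * (∑ pa, ‖v pa‖^2) := by
  induction ℓ with
  | zero =>
    intro y v
    rw [Fintype.sum_unique]
    simp only [pow_zero, mul_zero, one_mul]
    have bnd : ∀ α β : Fin 1 → Fin n,
        ‖dotProduct (star y) ((fockEval X α β (fun x => x.elim0)).mulVec v)‖ ^ 2
          ≤ (∑ p : Fin m, ‖y (p, α 0)‖ ^ 2) * (∑ p : Fin m, ‖v (p, β 0)‖ ^ 2) := by
      intro α β
      have key : dotProduct (star y) ((fockEval X α β (fun x => x.elim0)).mulVec v)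
          = ∑ p : Fin m, (starRingEnd ℂ) (y (p, α 0)) * v (p, β 0) := by
        have h0 : fockEval X α β (fun x => x.elim0)
            = oneKron (Fin m) (Matrix.single (α 0) (β 0) (1 : ℂ)) := by
          simp [fockEval]
        rw [h0]
        simp only [dotProduct, Pi.star_apply, oneKron_std_mulVec,
          Fintype.sum_prod_type]
        simp [mul_ite, RCLike.star_def]
      rw [key]
      calc ‖∑ p : Fin m, (starRingEnd ℂ) (y (p, α 0)) * v (p, β 0)‖ ^ 2
          ≤ (∑ p : Fin m, ‖y (p, α 0)‖ * ‖v (p, β 0)‖) ^ 2 := by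
            refine pow_le_pow_left₀ (norm_nonneg _) ?_ 2
            refine (norm_sum_le _ _).trans (le_of_eq ?_)
            simp [norm_mul]
        _ ≤ (∑ p : Fin m, ‖y (p, α 0)‖ ^ 2) * (∑ p : Fin m, ‖v (p, β 0)‖ ^ 2) :=
            Finset.sum_mul_sq_le_sq_mul_sq _ _ _
    have hy : (∑ a : Fin n, ∑ p : Fin m, ‖y (p, a)‖ ^ 2)
        = ∑ pa : Fin m × Fin n, ‖y pa‖ ^ 2 := by
      rw [Fintype.sum_prod_type]; exact Finset.sum_comm
    have hv : (∑ b : Fin n, ∑ p : Fin m, ‖v (p, b)‖ ^ 2)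
        = ∑ pa : Fin m × Fin n, ‖v pa‖ ^ 2 := by
      rw [Fintype.sum_prod_type]; exact Finset.sum_comm
    calc ∑ α : Fin 1 → Fin n, ∑ β : Fin 1 → Fin n,
          ‖dotProduct (star y) ((fockEval X α β (fun x => x.elim0)).mulVec v)‖ ^ 2
        ≤ ∑ α : Fin 1 → Fin n, ∑ β : Fin 1 → Fin n,
            (∑ p : Fin m, ‖y (p, α 0)‖ ^ 2) * (∑ p : Fin m, ‖v (p, β 0)‖ ^ 2) :=
          Finset.sum_le_sum fun α _ => Finset.sum_le_sum fun β _ => bnd α β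
      _ = (∑ a : Fin n, ∑ p : Fin m, ‖y (p, a)‖ ^ 2) *
            (∑ b : Fin n, ∑ p : Fin m, ‖v (p, b)‖ ^ 2) := by
          rw [← Fintype.sum_mul_sum]
          congr 1
          · exact Fintype.sum_equiv (Equiv.funUnique (Fin 1) (Fin n)) _ _ fun α => rfl
          · exact Fintype.sum_equiv (Equiv.funUnique (Fin 1) (Fin n)) _ _ fun β => rfl
      _ = (∑ pa : Fin m × Fin n, ‖y pa‖^2) * (∑ pa : Fin m × Fin n, ‖v pa‖^2) := by
          rw [hy, hv]
  | succ ℓ ih =>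
    intro y v
    have key : ∀ (w : Fin d) (a b : Fin n) (ω' : Fin ℓ → Fin d)
        (α' β' : Fin (ℓ+1) → Fin n),
        dotProduct (star y)
            ((fockEval X (Fin.snoc α' a) (Fin.snoc β' b) (Fin.snoc ω' w)).mulVec v)
          = dotProduct (star y)
            ((fockEval X α' β' ω').mulVec
              ((X w).mulVec
                ((oneKron (Fin m) (Matrix.single a b 1)).mulVec v))) := by
      intro w a b ω' α' β'
      rw [fockEval_snoc]
      simp only [Fin.init_snoc, Fin.snoc_last]
      rw [← Matrix.mulVec_mulVec, ← Matrix.mulVec_mulVec]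
    calc (∑ ω : Fin (ℓ+1) → Fin d, ∑ α : Fin (ℓ+2) → Fin n, ∑ β : Fin (ℓ+2) → Fin n,
          ‖dotProduct (star y) ((fockEval X α β ω).mulVec v)‖ ^ 2)
        = ∑ w : Fin d, ∑ a : Fin n, ∑ b : Fin n,
            ∑ ω' : Fin ℓ → Fin d, ∑ α' : Fin (ℓ+1) → Fin n, ∑ β' : Fin (ℓ+1) → Fin n,
            ‖dotProduct (star y)
              ((fockEval X α' β' ω').mulVec ((X w).mulVec
                ((oneKron (Fin m) (Matrix.single a b 1)).mulVec v)))‖ ^ 2 := by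
          rw [sum_rearrange]
          simp only [key]
      _ ≤ ∑ w : Fin d, ∑ a : Fin n, ∑ b : Fin n,
            (n : ℝ) ^ ℓ * colNorm X ^ (2*ℓ) * (∑ pa, ‖y pa‖^2) *
            (∑ pa, ‖(X w).mulVec
                ((oneKron (Fin m) (Matrix.single a b 1)).mulVec v) pa‖^2) :=
          Finset.sum_le_sum fun w _ => Finset.sum_le_sum fun a _ =>
            Finset.sum_le_sum fun b _ => ih y _
      _ = (n : ℝ) ^ ℓ * colNorm X ^ (2*ℓ) * (∑ pa, ‖y pa‖^2) *
            (∑ a : Fin n, ∑ b : Fin n, ∑ w : Fin d,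
              ∑ pa, ‖(X w).mulVec
                ((oneKron (Fin m) (Matrix.single a b 1)).mulVec v) pa‖^2) := by
          simp only [← Finset.mul_sum]
          congr 1
          rw [Finset.sum_comm]
          exact Finset.sum_congr rfl fun a _ => Finset.sum_comm
      _ ≤ (n : ℝ) ^ ℓ * colNorm X ^ (2*ℓ) * (∑ pa, ‖y pa‖^2) *
            (∑ a : Fin n, ∑ b : Fin n, colNorm X ^ 2 *
              ∑ pa, ‖(oneKron (Fin m) (Matrix.single a b 1)).mulVec v pa‖^2) := by
          have hc : (0:ℝ) ≤ colNorm X := by unfold colNorm; exact norm_nonneg _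
          refine mul_le_mul_of_nonneg_left ?_
            (mul_nonneg (mul_nonneg (pow_nonneg (Nat.cast_nonneg n) ℓ)
              (pow_nonneg hc (2*ℓ))) (by positivity))
          exact Finset.sum_le_sum fun a _ => Finset.sum_le_sum fun b _ => col_bound X _
      _ = (n : ℝ) ^ ℓ * colNorm X ^ (2*ℓ) * (∑ pa, ‖y pa‖^2) *
            (colNorm X ^ 2 * ((n : ℝ) * ∑ pa, ‖v pa‖^2)) := by
          congr 1
          simp only [sum_P, ← Finset.mul_sum]
          congr 1
          have hv : (∑ b : Fin n, ∑ p : Fin m, ‖v (p, b)‖ ^ 2)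
              = ∑ pa : Fin m × Fin n, ‖v pa‖ ^ 2 := by
            rw [Fintype.sum_prod_type]; exact Finset.sum_comm
          rw [Finset.sum_const, Finset.card_univ, Fintype.card_fin, nsmul_eq_mul, hv]
      _ = (n : ℝ) ^ (ℓ+1) * colNorm X ^ (2*(ℓ+1)) * (∑ pa, ‖y pa‖^2) *
            (∑ pa, ‖v pa‖^2) := by ring

/-- **Per-level Fock evaluation bound.** For `y = x⊗e_i`, `v = u⊗e_j` and
any `X`, the sum over all words `ω` of length `ℓ` and `α, β` of length `ℓ+1` of
`|y^* (E_{α,β}⋆e_ω)(X) v|²` is at most `n^ℓ ‖X‖_col^{2ℓ} ‖x‖² ‖u‖²`. -/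
theorem fock_evaluation_level_bound
    {d m n : ℕ} (hd : 0 < d) (hm : 0 < m) (hn : 0 < n)
    (X : Fin d → Matrix (Fin m × Fin n) (Fin m × Fin n) ℂ)
    (x u : Fin m → ℂ) (i j : Fin n) (ℓ : ℕ) :
    ∑ ω : Fin ℓ → Fin d, ∑ α : Fin (ℓ + 1) → Fin n, ∑ β : Fin (ℓ + 1) → Fin n,
        ‖dotProduct
            (star fun pa : Fin m × Fin n => x pa.1 * (if pa.2 = i then 1 else 0))
            ((fockEval X α β ω).mulVec
              (fun pa : Fin m × Fin n => u pa.1 * (if pa.2 = j then 1 else 0)))‖ ^ 2 ≤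
      (n : ℝ) ^ ℓ * colNorm X ^ (2 * ℓ) * (∑ p, ‖x p‖ ^ 2) * (∑ p, ‖u p‖ ^ 2) := by
  refine (main_bound X ℓ _ _).trans (le_of_eq ?_)
  have hx : (∑ pa : Fin m × Fin n, ‖x pa.1 * (if pa.2 = i then (1:ℂ) else 0)‖ ^ 2)
      = ∑ p : Fin m, ‖x p‖ ^ 2 := by
    rw [Fintype.sum_prod_type]
    refine Finset.sum_congr rfl fun p _ => ?_
    simp [mul_ite, apply_ite (fun z : ℂ => ‖z‖), apply_ite (fun r : ℝ => r ^ 2),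
      Finset.sum_ite_eq']
  have hu : (∑ pa : Fin m × Fin n, ‖u pa.1 * (if pa.2 = j then (1:ℂ) else 0)‖ ^ 2)
      = ∑ p : Fin m, ‖u p‖ ^ 2 := by
    rw [Fintype.sum_prod_type]
    refine Finset.sum_congr rfl fun p _ => ?_
    simp [mul_ite, apply_ite (fun z : ℂ => ‖z‖), apply_ite (fun r : ℝ => r ^ 2),
      Finset.sum_ite_eq']
  rw [hx, hu]


end MC
end
end

section
/- Fock-space realization identity: Let h ∈ F_n(ℂ^d) with coefficients ĥ_{α,β;ω} := ⟨E_{α,β}⋆e_ω, h⟩. On the Hilbert space H := ℂ^n ⊗ F_n(ℂ^d) define, for 1 ≤ k ≤ d and Z ∈ ℂ^{n×n}, A_k(Z) := Σ_{i,j=1}^n (Z E_{i,j}) ⊗ R_{i,j;k}^*, define c : ℂ^n → H by c v := v ⊗ h, and define b : ℂ^n → H as the adjoint of the map b^*(u⊗f) := Σ_{i,j=1}^n ⟨E_{i,j}⋆e_∅, f⟩ E_{i,j} u. Then for every Y ∈ (ℂ^{n×n})^d, every m ≥ 1, every X ∈ (ℂ^{mn×mn})^d, and every word ω = w_1⋯w_ℓ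 over {1,…,d}: (I_m⊗b)^* (id_m⊗A_{w_1})(X_{w_1} − I_m⊗Y_{w_1}) ⋯ (id_m⊗A_{w_ℓ})(X_{w_ℓ} − I_m⊗Y_{w_ℓ}) (I_m⊗c) = Σ ĥ_{α,β;ω} (E_{α,β}⋆e_ω)(X − I_m⊗Y), the sum over all words α, β of length ℓ+1 over {1,…,n}. -/
set_option synthInstance.maxHeartbeats 1000000
set_option maxHeartbeats 1000000

noncomputable section
namespace MC

variable {E : Type*} [NormedAddCommGroup E] [InnerProductSpace ℂ E]

/-- The index set of the orthonormal basis of the matricial Fock space `F_n(ℂ^d)`: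
triples `(α, β, ω)` of words with `|α| = |β| = |ω| + 1`. -/
def FockIdx (n d : ℕ) : Type :=
  Σ ℓ : ℕ, ((Fin (ℓ + 1) → Fin n) × (Fin (ℓ + 1) → Fin n) × (Fin ℓ → Fin d))

instance {n d : ℕ} : DecidableEq (FockIdx n d) :=
  inferInstanceAs (DecidableEq (Σ ℓ : ℕ, ((Fin (ℓ + 1) → Fin n) × (Fin (ℓ + 1) → Fin n) × (Fin ℓ → Fin d))))

/-- The matricial Fock space `F_n(ℂ^d)`, realized as `ℓ²` over `FockIdx n d`. -/
abbrev FockSpace (n d : ℕ) := lp (fun _ : FockIdx n d => ℂ) 2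

/-- Appending the letters `(a, b, w)` to the words of a Fock basis index. -/
def snocIdx {n d : ℕ} (idx : FockIdx n d) (a b : Fin n) (w : Fin d) : FockIdx n d :=
  ⟨idx.1 + 1, Fin.snoc idx.2.1 a, Fin.snoc idx.2.2.1 b, Fin.snoc idx.2.2.2 w⟩

/-- `(id_m⊗A_{i_1})(W_{i_1}) ⋯ (id_m⊗A_{i_ℓ})(W_{i_ℓ})` along a word `ω = i_1⋯i_ℓ`. -/
def ampWord {d : ℕ} {μ ν : Type*} [Fintype μ] [DecidableEq μ]
    (A : Fin d → Matrix ν ν ℂ → (E →L[ℂ] E)) (W : Fin d → Matrix (μ × ν) (μ × ν) ℂ) :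
    List (Fin d) → (PiLp 2 (fun _ : μ => E) →L[ℂ] PiLp 2 (fun _ : μ => E))
  | [] => 1
  | i :: t => amp (A i) (W i) * ampWord A W t

/-- The structure maps `A_k(Z) = Σ_{i,j} (Z E_{i,j}) ⊗ R_{i,j;k}^*` on
`ℂ^n ⊗ F_n(ℂ^d)`, built from the right creation operators `R`. -/
def fockA {n d : ℕ} (R : Fin n → Fin n → Fin d → (FockSpace n d →L[ℂ] FockSpace n d))
    (k : Fin d) (Z : Matrix (Fin n) (Fin n) ℂ) :
    PiLp 2 (fun _ : Fin n => FockSpace n d) →L[ℂ] PiLp 2 (fun _ : Fin n => FockSpace n d) :=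
  ∑ p, ∑ q, (inclL (Fin n) (FockSpace n d) p).comp
    ((∑ i, ∑ j, ((Z * Matrix.single i j (1 : ℂ)) p q) •
        ContinuousLinearMap.adjoint (R i j k)).comp (projL (Fin n) (FockSpace n d) q))

/-- The vacuum basis index `E_{i,j} ⋆ e_∅`. -/
def vacIdx {n : ℕ} (d : ℕ) (i j : Fin n) : FockIdx n d :=
  ⟨0, fun _ => i, fun _ => j, Fin.elim0⟩

/-- The map `b^* : ℂ^n ⊗ F_n(ℂ^d) → ℂ^n`,
`b^*(u⊗f) = Σ_{i,j} ⟨E_{i,j}⋆e_∅, f⟩ E_{i,j} u`. -/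
def fockBstar (n d : ℕ) :
    PiLp 2 (fun _ : Fin n => FockSpace n d) →L[ℂ] EuclideanSpace ℂ (Fin n) :=
  ∑ i, ∑ j, ((innerSL ℂ (lp.single 2 (vacIdx d i j) (1 : ℂ))).comp
      (projL (Fin n) (FockSpace n d) j)).smulRight (EuclideanSpace.single i (1 : ℂ))

/-- The map `c : ℂ^n → ℂ^n ⊗ F_n(ℂ^d)`, `c v = v ⊗ h`. -/
def fockC {n d : ℕ} (h : FockSpace n d) :
    EuclideanSpace ℂ (Fin n) →L[ℂ] PiLp 2 (fun _ : Fin n => FockSpace n d) :=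
  ∑ p, (EuclideanSpace.proj p).smulRight (inclL (Fin n) (FockSpace n d) p h)

section Helpers

variable {E : Type*} [NormedAddCommGroup E] [InnerProductSpace ℂ E]

@[simp] lemma piLp_sum_apply {ι : Type*} {G : ι → Type*} [∀ i, NormedAddCommGroup (G i)]
    {κ : Type*} (s : Finset κ) (f : κ → PiLp 2 G) (p : ι) :
    (∑ k ∈ s, f k) p = ∑ k ∈ s, f k p := by
  classical
  induction s using Finset.induction with
  | empty => rfl
  | insert _ _ h ih => rw [Finset.sum_insert h, Finset.sum_insert h, PiLp.add_apply, ih]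

@[simp] lemma projL_apply {ι : Type*} [Fintype ι] (p : ι)
    (f : PiLp 2 fun _ : ι => E) : projL ι E p f = f p := rfl

@[simp] lemma inclL_apply {ι : Type*} [Fintype ι] [DecidableEq ι] (p q : ι) (x : E) :
    inclL ι E p x q = if q = p then x else 0 := by
  simp [inclL, ContinuousLinearMap.pi, apply_ite (fun T : E →L[ℂ] E => T x)]

lemma amp_apply {μ ν : Type*} [Fintype μ] [DecidableEq μ]
    (A : Matrix ν ν ℂ → (E →L[ℂ] E)) (Z : Matrix (μ × ν) (μ × ν) ℂ)
    (f : PiLp 2 fun _ : μ => E) (p : μ) :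
    amp A Z f p = ∑ q, A (blk Z p q) (f q) := by
  simp [amp, ContinuousLinearMap.sum_apply]

lemma restrL_apply {μ ν : Type*} [Fintype μ] [Fintype ν] [DecidableEq ν] (p : μ)
    (x : EuclideanSpace ℂ (μ × ν)) (i : ν) :
    restrL μ ν p x i = x (p, i) := by
  simp [restrL, ContinuousLinearMap.sum_apply, EuclideanSpace.single_apply]

lemma ampVec_apply {μ ν : Type*} [Fintype μ] [DecidableEq μ] [Fintype ν] [DecidableEq ν]
    (b : EuclideanSpace ℂ ν →L[ℂ] E) (x : EuclideanSpace ℂ (μ × ν)) (p : μ) :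
    ampVec b x p = b (restrL μ ν p x) := by
  simp [ampVec, ContinuousLinearMap.sum_apply]

end Helpers
section Helpers2

variable {E : Type*} [NormedAddCommGroup E] [InnerProductSpace ℂ E]

lemma fockC_apply {n d : ℕ} (h : FockSpace n d) (x : EuclideanSpace ℂ (Fin n)) (q : Fin n) :
    fockC h x q = x q • h := by
  simp [fockC, ContinuousLinearMap.sum_apply, apply_ite (fun z : FockSpace n d => x _ • z)]

lemma fockA_apply {n d : ℕ} (R : Fin n → Fin n → Fin d → (FockSpace n d →L[ℂ] FockSpace n d))
    (k : Fin d) (Z : Matrix (Fin n) (Fin n) ℂ)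
    (f : PiLp 2 fun _ : Fin n => FockSpace n d) (r : Fin n) :
    fockA R k Z f r = ∑ q, ∑ i, ∑ j, ((Z * Matrix.single i j (1 : ℂ)) r q) •
      ContinuousLinearMap.adjoint (R i j k) (f q) := by
  simp [fockA, ContinuousLinearMap.sum_apply]

lemma fockBstar_apply {n d : ℕ} (f : PiLp 2 fun _ : Fin n => FockSpace n d) (i : Fin n) :
    fockBstar n d f i = ∑ j, inner (𝕜 := ℂ) (lp.single 2 (vacIdx d i j) (1 : ℂ)) (f j) := by
  simp [fockBstar, ContinuousLinearMap.sum_apply, EuclideanSpace.single_apply]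

end Helpers2
section Helpers3

variable {E : Type*} [NormedAddCommGroup E] [InnerProductSpace ℂ E]

lemma euclidean_decomp {ι : Type*} [Fintype ι] [DecidableEq ι] (x : EuclideanSpace ℂ ι) :
    x = ∑ i, x i • EuclideanSpace.single i (1 : ℂ) := by
  ext j
  simp [EuclideanSpace.single_apply]

lemma clm_ext_single {ι : Type*} [Fintype ι] [DecidableEq ι]
    {F : Type*} [NormedAddCommGroup F] [NormedSpace ℂ F]
    {T S : EuclideanSpace ℂ ι →L[ℂ] F}
    (hTS : ∀ i, T (EuclideanSpace.single i (1 : ℂ)) = S (EuclideanSpace.single i (1 : ℂ))) :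
    T = S := by
  ext x
  rw [euclidean_decomp x, map_sum, map_sum]
  simp [hTS]

lemma fock_coord {n d : ℕ} (f : FockSpace n d) (idx : FockIdx n d) :
    inner (𝕜 := ℂ) (lp.single 2 idx (1 : ℂ)) f = f idx := by
  rw [lp.inner_single_left]
  simp [RCLike.inner_apply]

lemma adjR_coeff {n d : ℕ}
    (R : Fin n → Fin n → Fin d → (FockSpace n d →L[ℂ] FockSpace n d))
    (hR : ∀ (a b : Fin n) (w : Fin d) (idx : FockIdx n d),
      R a b w (lp.single 2 idx 1) = lp.single 2 (snocIdx idx a b w) 1)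
    (i j : Fin n) (w : Fin d) (f : FockSpace n d) (idx : FockIdx n d) :
    (ContinuousLinearMap.adjoint (R i j w) f) idx = f (snocIdx idx i j w) := by
  rw [← fock_coord, ContinuousLinearMap.adjoint_inner_right, hR, fock_coord]

lemma ampWord_append {d : ℕ} {μ ν : Type*} [Fintype μ] [DecidableEq μ]
    (A : Fin d → Matrix ν ν ℂ → (E →L[ℂ] E)) (W : Fin d → Matrix (μ × ν) (μ × ν) ℂ)
    (l₁ l₂ : List (Fin d)) :
    ampWord A W (l₁ ++ l₂) = ampWord A W l₁ * ampWord A W l₂ := by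
  induction l₁ with
  | nil => simp [ampWord]
  | cons a t ih => simp [ampWord, ih, mul_assoc]

end Helpers3
section Helpers4

lemma toECLM_apply {ι : Type*} [Fintype ι] [DecidableEq ι] (M : Matrix ι ι ℂ)
    (x : EuclideanSpace ℂ ι) (i : ι) :
    (Matrix.toEuclideanCLM (𝕜 := ℂ) M x) i = ∑ j, M i j * x j := by
  have := congrFun (Matrix.ofLp_toEuclideanCLM M x) i
  simpa [Matrix.mulVec, dotProduct] using this

lemma ampA_comp {n d m : ℕ}
    (R : Fin n → Fin n → Fin d → (FockSpace n d →L[ℂ] FockSpace n d))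
    (k : Fin d) (W : Matrix (Fin m × Fin n) (Fin m × Fin n) ℂ) (h : FockSpace n d) :
    (amp (fockA R k) W).comp (ampVec (fockC h)) =
    ∑ i, ∑ j, (ampVec (fockC (ContinuousLinearMap.adjoint (R i j k) h))).comp
      (Matrix.toEuclideanCLM (𝕜 := ℂ) (W * oneKron (Fin m) (Matrix.single i j (1 : ℂ)))) := by
  apply clm_ext_single
  rintro ⟨u, v⟩
  ext p r
  simp only [ContinuousLinearMap.comp_apply, ContinuousLinearMap.sum_apply, piLp_sum_apply,
    amp_apply, fockA_apply, ampVec_apply, fockC_apply, restrL_apply, toECLM_apply,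
    EuclideanSpace.single_apply, Matrix.mul_apply, oneKron, Matrix.single,
    Matrix.of_apply, blk, Fintype.sum_prod_type]
  simp only [ite_smul, one_smul, zero_smul, smul_ite, smul_zero, mul_ite, ite_mul,
    one_mul, zero_mul, mul_one, mul_zero, Finset.sum_ite_eq, Finset.sum_ite_eq',
    Finset.mem_univ, if_true, Prod.mk.injEq]
  simp [ite_and, apply_ite (ContinuousLinearMap.adjoint (R _ _ k)), Finset.sum_ite_eq,
    Finset.sum_ite_eq']

end Helpers4
section Helpers5

def constEquiv (n : ℕ) : Fin n ≃ (Fin 1 → Fin n) where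
  toFun a := fun _ => a
  invFun g := g 0
  left_inv a := rfl
  right_inv g := funext fun i => by rw [Subsingleton.elim i (0 : Fin 1)]

lemma Bop_comp_C {n d m : ℕ} (h : FockSpace n d)
    (W : Fin d → Matrix (Fin m × Fin n) (Fin m × Fin n) ℂ) (ω : Fin 0 → Fin d) :
    (ContinuousLinearMap.adjoint
        (ampVec (μ := Fin m) (ContinuousLinearMap.adjoint (fockBstar n d)))).comp
      (ampVec (fockC h)) =
    ∑ α : Fin 1 → Fin n, ∑ β : Fin 1 → Fin n,
      h (⟨0, α, β, ω⟩ : FockIdx n d) •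
        Matrix.toEuclideanCLM (𝕜 := ℂ) (fockEval W α β ω) := by
  have hω : ω = Fin.elim0 := funext fun i => i.elim0
  subst hω
  apply clm_ext_single
  rintro ⟨u, v⟩
  ext z
  obtain ⟨u', v'⟩ := z
  have lhs1 : ∀ (f : EuclideanSpace ℂ (Fin m × Fin n)) (z : Fin m × Fin n), f z
      = inner (𝕜 := ℂ) (EuclideanSpace.single z (1 : ℂ)) f := by
    intro f z; rw [EuclideanSpace.inner_single_left]; simp
  rw [ContinuousLinearMap.comp_apply,
    lhs1 ((ContinuousLinearMap.adjoint (ampVec (ContinuousLinearMap.adjoint (fockBstar n d))))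
      ((ampVec (fockC h)) (EuclideanSpace.single (u, v) 1))) (u', v'),
    ContinuousLinearMap.adjoint_inner_right]
  simp only [PiLp.inner_apply, ampVec_apply, ContinuousLinearMap.adjoint_inner_left,
    fockBstar_apply, fockC_apply, restrL_apply, EuclideanSpace.single_apply,
    RCLike.inner_apply, inner_smul_right, fock_coord, ContinuousLinearMap.sum_apply,
    piLp_sum_apply, ContinuousLinearMap.smul_apply, toECLM_apply, fockEval,
    List.finRange_zero, List.map_nil, List.prod_nil, mul_one, oneKron,
    Matrix.single, Matrix.of_apply, Fintype.sum_prod_type, PiLp.smul_apply,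
    smul_eq_mul]
  simp only [← Equiv.sum_comp (constEquiv n)]
  simp only [constEquiv, Equiv.coe_fn_mk]
  simp [Prod.mk.injEq, ite_and, apply_ite (starRingEnd ℂ), Finset.sum_ite_eq,
    Finset.sum_ite_eq', vacIdx, mul_comm, eq_comm]

end Helpers5
section Helpers6

lemma fockEval_snoc_s15 {d m n : ℕ} (W : Fin d → Matrix (Fin m × Fin n) (Fin m × Fin n) ℂ)
    {ℓ : ℕ} (α' β' : Fin (ℓ + 1) → Fin n) (i j : Fin n) (ω' : Fin ℓ → Fin d) (w : Fin d) :
    fockEval W (Fin.snoc α' i) (Fin.snoc β' j) (Fin.snoc ω' w) =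
    fockEval W α' β' ω' *
      (W w * oneKron (Fin m) (Matrix.single i j (1 : ℂ))) := by
  unfold fockEval
  rw [List.finRange_succ_last, List.map_append, List.map_map, List.prod_append]
  have h0 : (Fin.snoc α' i : Fin (ℓ + 2) → Fin n) 0 = α' 0 := by
    rw [show (0 : Fin (ℓ + 2)) = Fin.castSucc 0 from rfl, Fin.snoc_castSucc]
  have h0' : (Fin.snoc β' j : Fin (ℓ + 2) → Fin n) 0 = β' 0 := by
    rw [show (0 : Fin (ℓ + 2)) = Fin.castSucc 0 from rfl, Fin.snoc_castSucc]
  have hmap : ∀ t : Fin ℓ,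
      W ((Fin.snoc ω' w : Fin (ℓ + 1) → Fin d) (Fin.castSucc t)) *
        oneKron (Fin m) (Matrix.single ((Fin.snoc α' i : Fin (ℓ + 2) → Fin n) (Fin.castSucc t).succ)
          ((Fin.snoc β' j : Fin (ℓ + 2) → Fin n) (Fin.castSucc t).succ) (1 : ℂ)) =
      W (ω' t) * oneKron (Fin m) (Matrix.single (α' t.succ) (β' t.succ) (1 : ℂ)) := by
    intro t
    rw [Fin.snoc_castSucc, Fin.succ_castSucc, Fin.snoc_castSucc, Fin.snoc_castSucc]
  simp only [Function.comp_def, h0, h0', List.map_cons, List.map_nil, List.prod_cons,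
    List.prod_nil, Fin.succ_last, Fin.snoc_last, mul_one, mul_assoc]
  rw [List.map_congr_left (fun t _ => hmap t)]

end Helpers6
section Helpers7

variable {E₁ E₂ E₃ : Type*} [NormedAddCommGroup E₁] [NormedAddCommGroup E₂]
  [NormedAddCommGroup E₃] [NormedSpace ℂ E₁] [NormedSpace ℂ E₂] [NormedSpace ℂ E₃]

lemma clm_comp_sum {κ : Type*} (T : E₂ →L[ℂ] E₃) (s : Finset κ) (f : κ → (E₁ →L[ℂ] E₂)) :
    T.comp (∑ k ∈ s, f k) = ∑ k ∈ s, T.comp (f k) := by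
  ext x
  simp [ContinuousLinearMap.sum_apply, map_sum]

lemma clm_sum_comp {κ : Type*} (T : E₁ →L[ℂ] E₂) (s : Finset κ) (f : κ → (E₂ →L[ℂ] E₃)) :
    (∑ k ∈ s, f k).comp T = ∑ k ∈ s, (f k).comp T := by
  ext x
  simp [ContinuousLinearMap.sum_apply]

lemma sum_snoc_s15 {M : Type*} [AddCommMonoid M] {n ℓ : ℕ} (F : (Fin (ℓ + 1) → Fin n) → M) :
    ∑ α, F α = ∑ i : Fin n, ∑ α' : Fin ℓ → Fin n, F (Fin.snoc α' i) := by
  rw [← Equiv.sum_comp (Fin.snocEquiv (fun _ => Fin n)) F, Fintype.sum_prod_type]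
  rfl

end Helpers7
section Key

lemma key_identity {n d : ℕ}
    (R : Fin n → Fin n → Fin d → (FockSpace n d →L[ℂ] FockSpace n d))
    (hR : ∀ (a b : Fin n) (w : Fin d) (idx : FockIdx n d),
      R a b w (lp.single 2 idx 1) = lp.single 2 (snocIdx idx a b w) 1)
    {m : ℕ} (W : Fin d → Matrix (Fin m × Fin n) (Fin m × Fin n) ℂ)
    (ℓ : ℕ) :
    ∀ (ω : Fin ℓ → Fin d) (h : FockSpace n d),
    (ContinuousLinearMap.adjoint
        (ampVec (μ := Fin m) (ContinuousLinearMap.adjoint (fockBstar n d)))).comp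
      ((ampWord (fockA R) W (List.ofFn ω)).comp (ampVec (fockC h))) =
    ∑ α : Fin (ℓ + 1) → Fin n, ∑ β : Fin (ℓ + 1) → Fin n,
      h (⟨ℓ, α, β, ω⟩ : FockIdx n d) •
        Matrix.toEuclideanCLM (𝕜 := ℂ) (fockEval W α β ω) := by
  induction ℓ with
  | zero =>
    intro ω h
    rw [List.ofFn_zero]
    have h1 : ampWord (fockA R) W ([] : List (Fin d)) = 1 := rfl
    rw [h1, ContinuousLinearMap.one_def, ContinuousLinearMap.id_comp]
    exact Bop_comp_C h W ω
  | succ ℓ IH =>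
    intro ω h
    set wL := ω (Fin.last ℓ) with hwL
    have hsing : ampWord (fockA R) W [wL] = amp (fockA R wL) (W wL) := by
      simp [ampWord]
    have step1 :
        (ContinuousLinearMap.adjoint
            (ampVec (μ := Fin m) (ContinuousLinearMap.adjoint (fockBstar n d)))).comp
          ((ampWord (fockA R) W (List.ofFn ω)).comp (ampVec (fockC h))) =
        ∑ i : Fin n, ∑ j : Fin n,
          ((ContinuousLinearMap.adjoint
              (ampVec (μ := Fin m) (ContinuousLinearMap.adjoint (fockBstar n d)))).comp
            ((ampWord (fockA R) W (List.ofFn fun t => ω t.castSucc)).comp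
              (ampVec (fockC (ContinuousLinearMap.adjoint (R i j wL) h))))).comp
            (Matrix.toEuclideanCLM (𝕜 := ℂ)
              (W wL * oneKron (Fin m) (Matrix.single i j (1 : ℂ)))) := by
      rw [List.ofFn_succ', List.concat_eq_append, ampWord_append, hsing,
        ContinuousLinearMap.mul_def, ContinuousLinearMap.comp_assoc, ampA_comp]
      rw [clm_comp_sum, clm_comp_sum]
      refine Finset.sum_congr rfl fun i _ => ?_
      rw [clm_comp_sum, clm_comp_sum]
      refine Finset.sum_congr rfl fun j _ => ?_
      rw [← ContinuousLinearMap.comp_assoc, ← ContinuousLinearMap.comp_assoc,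
        ContinuousLinearMap.comp_assoc (ContinuousLinearMap.adjoint _)]
    rw [step1]
    have step2 : ∀ i j : Fin n,
        ((ContinuousLinearMap.adjoint
            (ampVec (μ := Fin m) (ContinuousLinearMap.adjoint (fockBstar n d)))).comp
          ((ampWord (fockA R) W (List.ofFn fun t => ω t.castSucc)).comp
            (ampVec (fockC (ContinuousLinearMap.adjoint (R i j wL) h))))).comp
          (Matrix.toEuclideanCLM (𝕜 := ℂ)
            (W wL * oneKron (Fin m) (Matrix.single i j (1 : ℂ)))) =
        ∑ α' : Fin (ℓ + 1) → Fin n, ∑ β' : Fin (ℓ + 1) → Fin n,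
          h (⟨ℓ + 1, Fin.snoc α' i, Fin.snoc β' j, ω⟩ : FockIdx n d) •
            Matrix.toEuclideanCLM (𝕜 := ℂ)
              (fockEval W (Fin.snoc α' i) (Fin.snoc β' j) ω) := by
      intro i j
      rw [IH (fun t => ω t.castSucc) (ContinuousLinearMap.adjoint (R i j wL) h)]
      rw [clm_sum_comp]
      refine Finset.sum_congr rfl fun α' _ => ?_
      rw [clm_sum_comp]
      refine Finset.sum_congr rfl fun β' _ => ?_
      rw [ContinuousLinearMap.smul_comp]
      erw [adjR_coeff R hR]
      have hidx : snocIdx (⟨ℓ, α', β', fun t => ω t.castSucc⟩ : FockIdx n d) i j wL =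
          (⟨ℓ + 1, Fin.snoc α' i, Fin.snoc β' j, Fin.snoc (fun t => ω t.castSucc) wL⟩ :
            FockIdx n d) := rfl
      rw [hidx]
      have hω : Fin.snoc (fun t => ω t.castSucc) wL = ω := Fin.snoc_init_self ω
      rw [hω]
      congr 1
      rw [← ContinuousLinearMap.mul_def, ← map_mul, ← fockEval_snoc_s15, hω]
    calc
      ∑ i : Fin n, ∑ j : Fin n,
          ((ContinuousLinearMap.adjoint
              (ampVec (μ := Fin m) (ContinuousLinearMap.adjoint (fockBstar n d)))).comp
            ((ampWord (fockA R) W (List.ofFn fun t => ω t.castSucc)).comp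
              (ampVec (fockC (ContinuousLinearMap.adjoint (R i j wL) h))))).comp
            (Matrix.toEuclideanCLM (𝕜 := ℂ)
              (W wL * oneKron (Fin m) (Matrix.single i j (1 : ℂ))))
        = ∑ i : Fin n, ∑ j : Fin n, ∑ α' : Fin (ℓ + 1) → Fin n, ∑ β' : Fin (ℓ + 1) → Fin n,
            h (⟨ℓ + 1, Fin.snoc α' i, Fin.snoc β' j, ω⟩ : FockIdx n d) •
              Matrix.toEuclideanCLM (𝕜 := ℂ)
                (fockEval W (Fin.snoc α' i) (Fin.snoc β' j) ω) := by
          refine Finset.sum_congr rfl fun i _ => Finset.sum_congr rfl fun j _ => step2 i j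
      _ = ∑ α : Fin (ℓ + 2) → Fin n, ∑ β : Fin (ℓ + 2) → Fin n,
            h (⟨ℓ + 1, α, β, ω⟩ : FockIdx n d) •
              Matrix.toEuclideanCLM (𝕜 := ℂ) (fockEval W α β ω) := by
          rw [sum_snoc_s15 (fun α => ∑ β : Fin (ℓ + 2) → Fin n,
            h (⟨ℓ + 1, α, β, ω⟩ : FockIdx n d) •
              Matrix.toEuclideanCLM (𝕜 := ℂ) (fockEval W α β ω))]
          refine Finset.sum_congr rfl fun i _ => ?_
          rw [Finset.sum_comm]
          refine Finset.sum_congr rfl fun α' _ => ?_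
          rw [sum_snoc_s15 (fun β => h (⟨ℓ + 1, Fin.snoc α' i, β, ω⟩ : FockIdx n d) •
            Matrix.toEuclideanCLM (𝕜 := ℂ) (fockEval W (Fin.snoc α' i) β ω))]

end Key
/-- **Fock-space realization identity.** For `h ∈ F_n(ℂ^d)` and the
realization `(A, b, c)` built from the right creation operators `R` on the matricial Fock
space, the word moments of `(A,b,c)` ampliated at `X - I_m⊗Y` recover the coefficient sum
`Σ_{α,β} ĥ_{α,β;ω} (E_{α,β}⋆e_ω)(X - I_m⊗Y)`. -/
theorem fock_space_realization_identity
    {n d : ℕ} (h : FockSpace n d)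
    (R : Fin n → Fin n → Fin d → (FockSpace n d →L[ℂ] FockSpace n d))
    (hR : ∀ (a b : Fin n) (w : Fin d) (idx : FockIdx n d),
      R a b w (lp.single 2 idx 1) = lp.single 2 (snocIdx idx a b w) 1)
    (Y : Fin d → Matrix (Fin n) (Fin n) ℂ)
    (m : ℕ) (hm : 0 < m) (X : Fin d → Matrix (Fin m × Fin n) (Fin m × Fin n) ℂ)
    (ℓ : ℕ) (ω : Fin ℓ → Fin d) :
    (ContinuousLinearMap.adjoint
        (ampVec (μ := Fin m) (ContinuousLinearMap.adjoint (fockBstar n d)))).comp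
      ((ampWord (fockA R) (fun j => X j - oneKron (Fin m) (Y j)) (List.ofFn ω)).comp
        (ampVec (fockC h))) =
    ∑ α : Fin (ℓ + 1) → Fin n, ∑ β : Fin (ℓ + 1) → Fin n,
      h (⟨ℓ, α, β, ω⟩ : FockIdx n d) •
        Matrix.toEuclideanCLM (𝕜 := ℂ)
          (fockEval (fun j => X j - oneKron (Fin m) (Y j)) α β ω) := by
  exact key_identity R hR (fun j => X j - oneKron (Fin m) (Y j)) ℓ ω h

end MC
end
end

section
/- Haagerup-type norm bound on tensor powers: Let n ≥ 1, ℓ ≥ 1 and m_0 = m_ℓ = 1, m_1,…,m_{ℓ-1} ≥ 1. For 1 ≤ s ≤ ℓ let A^{(s)} = (A^{(s)}_{p,q}) be an m_{s-1} × m_s matrix whose entries are n×n complex matrices, regarded as a linear operator from (ℂ^n)^{m_s} to (ℂ^n)^{m_{s-1}} with operator norm ‖A^{(s)}‖. Define A := Σ_{γ_1=1}^{m_1} ⋯ Σ_{γ_{ℓ-1}=1}^{m_{ℓ-1}} A^{(1)}_{1,γ_1} ⊗ A^{(2)}_{γ_1,γ_2} ⊗ ⋯ ⊗ A^{(ℓ)}_{γ_{ℓ-1},1},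 an ℓ-fold Kronecker product sum, i.e. an n^ℓ × n^ℓ matrix acting on (ℂ^n)^{⊗ℓ}. Then ‖A‖_op ≤ ‖A^{(1)}‖ · ‖A^{(2)}‖ ⋯ ‖A^{(ℓ)}‖. (Consequently, the operator norm on (ℂ^{n×n})^{⊗ℓ} is dominated by the Haagerup tensor norm.) -/
set_option synthInstance.maxHeartbeats 1000000
set_option maxHeartbeats 1000000

noncomputable section
namespace MC

variable {E : Type*} [NormedAddCommGroup E] [InnerProductSpace ℂ E]

/-- The operator norm of a (rectangular) complex matrix with respect to the Euclidean
norms. -/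
def matOpNorm {ι κ : Type*} [Fintype ι] [Fintype κ] [DecidableEq ι] (M : Matrix κ ι ℂ) :
    ℝ :=
  ‖LinearMap.toContinuousLinearMap (Matrix.toEuclideanLin M)‖

open scoped Matrix.Norms.L2Operator

lemma matOpNorm_eq_l2 {ι κ : Type*} [Fintype ι] [Fintype κ] [DecidableEq ι] (M : Matrix κ ι ℂ) :
    matOpNorm M = ‖M‖ := rfl
lemma euclid_comp_norm {ι κ : Type*} [Fintype ι] [Fintype κ] (e : ι ≃ κ)
    (x : EuclideanSpace ℂ κ) :
    ‖((WithLp.equiv 2 (ι → ℂ)).symm fun i => x (e i))‖ = ‖x‖ := by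
  simp only [EuclideanSpace.norm_eq]
  congr 1
  rw [← Equiv.sum_comp e (fun k => ‖x k‖ ^ 2)]
  rfl
lemma matOpNorm_le_bound {ι κ : Type*} [Fintype ι] [Fintype κ] [DecidableEq ι]
    (M : Matrix κ ι ℂ) (C : ℝ) (hC : 0 ≤ C)
    (h : ∀ x : EuclideanSpace ℂ ι,
      ‖((WithLp.equiv 2 (κ → ℂ)).symm (M.mulVec (WithLp.equiv 2 (ι → ℂ) x)))‖ ≤ C * ‖x‖) :
    matOpNorm M ≤ C := by
  apply ContinuousLinearMap.opNorm_le_bound _ hC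
  intro x
  exact h x
lemma matOpNorm_submatrix_le {ι κ ι' κ' : Type*} [Fintype ι] [Fintype κ] [Fintype ι'] [Fintype κ']
    [DecidableEq ι] [DecidableEq ι'] (M : Matrix κ ι ℂ) (e₁ : κ' ≃ κ) (e₂ : ι' ≃ ι) :
      matOpNorm (M.submatrix e₁ e₂) ≤ matOpNorm M := by
  apply matOpNorm_le_bound _ _ (norm_nonneg _)
  intro x
  rw [Matrix.submatrix_mulVec_equiv]
  have h1 : ((WithLp.equiv 2 (κ' → ℂ)).symm ((M.mulVec ((WithLp.equiv 2 (ι' → ℂ) x) ∘ e₂.symm)) ∘ e₁))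
      = ((WithLp.equiv 2 (κ' → ℂ)).symm fun i =>
          ((WithLp.equiv 2 (κ → ℂ)).symm (M.mulVec ((WithLp.equiv 2 (ι' → ℂ) x) ∘ e₂.symm))) (e₁ i)) := rfl
  rw [h1, euclid_comp_norm e₁]
  have h2 : ((WithLp.equiv 2 (ι' → ℂ) x) ∘ e₂.symm)
      = WithLp.equiv 2 (ι → ℂ) ((WithLp.equiv 2 (ι → ℂ)).symm fun j => x (e₂.symm j)) := rfl
  rw [h2]
  have h3 := Matrix.l2_opNorm_mulVec M ((WithLp.equiv 2 (ι → ℂ)).symm fun j => x (e₂.symm j))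
  calc _ ≤ ‖M‖ * ‖((WithLp.equiv 2 (ι → ℂ)).symm fun j => x (e₂.symm j))‖ := h3
  _ = matOpNorm M * ‖x‖ := by rw [euclid_comp_norm e₂.symm, matOpNorm_eq_l2]
lemma matOpNorm_submatrix {ι κ ι' κ' : Type*} [Fintype ι] [Fintype κ] [Fintype ι'] [Fintype κ']
    [DecidableEq ι] [DecidableEq ι'] (M : Matrix κ ι ℂ) (e₁ : κ' ≃ κ) (e₂ : ι' ≃ ι) :
    matOpNorm (M.submatrix e₁ e₂) = matOpNorm M := by
  refine le_antisymm (matOpNorm_submatrix_le M e₁ e₂) ?_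
  have h := matOpNorm_submatrix_le (M.submatrix e₁ e₂) e₁.symm e₂.symm
  have h2 : (M.submatrix e₁ e₂).submatrix e₁.symm e₂.symm = M := by
    ext i j; simp [Matrix.submatrix_apply]
  rwa [h2] at h

lemma euclid_sq_norm {τ : Type*} [Fintype τ] (y : EuclideanSpace ℂ τ) :
    ‖y‖ ^ 2 = ∑ i, ‖y i‖ ^ 2 := by
  rw [EuclideanSpace.norm_eq, Real.sq_sqrt]
  positivity

lemma matOpNorm_kron_one {ι κ σ : Type*} [Fintype ι] [Fintype κ] [Fintype σ]
    [DecidableEq ι] [DecidableEq σ] (M : Matrix κ ι ℂ) :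
    matOpNorm (Matrix.of fun (p : κ × σ) (q : ι × σ) =>
        M p.1 q.1 * (if p.2 = q.2 then (1:ℂ) else 0)) ≤ matOpNorm M := by
  set K : Matrix (κ × σ) (ι × σ) ℂ := Matrix.of fun p q => M p.1 q.1 * (if p.2 = q.2 then 1 else 0)
  apply matOpNorm_le_bound _ _ (norm_nonneg _)
  intro x
  set xk : σ → EuclideanSpace ℂ ι := fun k => (WithLp.equiv 2 (ι → ℂ)).symm fun j => x (j, k)
    with hxk
  have h1 : ∀ p : κ × σ, (K.mulVec (WithLp.equiv 2 ((ι × σ) → ℂ) x)) p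
      = (M.mulVec (WithLp.equiv 2 (ι → ℂ) (xk p.2))) p.1 := by
    rintro ⟨i, k⟩
    simp only [Matrix.mulVec, dotProduct, K, Matrix.of_apply, Fintype.sum_prod_type]
    refine Finset.sum_congr rfl fun j _ => ?_
    rw [Finset.sum_eq_single k]
    · simp [xk]
    · intro l _ hl; simp [Ne.symm hl]
    · intro h; exact absurd (Finset.mem_univ k) h
  have h2 : ∀ k, ∑ i, ‖(M.mulVec (WithLp.equiv 2 (ι → ℂ) (xk k))) i‖ ^ 2
      ≤ (matOpNorm M) ^ 2 * ‖xk k‖ ^ 2 := by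
    intro k
    have h3 := Matrix.l2_opNorm_mulVec M (xk k)
    have h4 : ∑ i, ‖(M.mulVec (WithLp.equiv 2 (ι → ℂ) (xk k))) i‖ ^ 2
        = ‖(EuclideanSpace.equiv κ ℂ).symm (M.mulVec (xk k))‖ ^ 2 := by
      rw [euclid_sq_norm]
      rfl
    rw [h4, ← matOpNorm_eq_l2] at *
    calc ‖(EuclideanSpace.equiv κ ℂ).symm (M.mulVec (xk k))‖ ^ 2
        ≤ (matOpNorm M * ‖xk k‖) ^ 2 := by
          apply pow_le_pow_left₀ (norm_nonneg _) h3
      _ = (matOpNorm M) ^ 2 * ‖xk k‖ ^ 2 := by ring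
  have hx : ‖x‖ ^ 2 = ∑ k, ‖xk k‖ ^ 2 := by
    rw [euclid_sq_norm, Fintype.sum_prod_type_right]
    refine Finset.sum_congr rfl fun k _ => ?_
    rw [euclid_sq_norm]
    rfl
  have hfinal : ‖(WithLp.equiv 2 ((κ × σ) → ℂ)).symm
      (K.mulVec (WithLp.equiv 2 ((ι × σ) → ℂ) x))‖ ^ 2 ≤ (matOpNorm M * ‖x‖) ^ 2 := by
    rw [euclid_sq_norm]
    calc (∑ p : κ × σ, ‖(WithLp.equiv 2 ((κ × σ) → ℂ)).symm
            (K.mulVec (WithLp.equiv 2 ((ι × σ) → ℂ) x)) p‖ ^ 2)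
        = ∑ k, ∑ i, ‖(M.mulVec (WithLp.equiv 2 (ι → ℂ) (xk k))) i‖ ^ 2 := by
          rw [show (∑ p : κ × σ, ‖(WithLp.equiv 2 ((κ × σ) → ℂ)).symm
              (K.mulVec (WithLp.equiv 2 ((ι × σ) → ℂ) x)) p‖ ^ 2)
            = ∑ p : κ × σ, ‖(K.mulVec (WithLp.equiv 2 ((ι × σ) → ℂ) x)) p‖ ^ 2 from rfl]
          rw [Fintype.sum_prod_type_right]
          exact Finset.sum_congr rfl fun k _ => Finset.sum_congr rfl fun i _ => by rw [h1 (i,k)]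
      _ ≤ ∑ k, (matOpNorm M) ^ 2 * ‖xk k‖ ^ 2 := Finset.sum_le_sum fun k _ => h2 k
      _ = (matOpNorm M) ^ 2 * ∑ k, ‖xk k‖ ^ 2 := by rw [Finset.mul_sum]
      _ = (matOpNorm M * ‖x‖) ^ 2 := by rw [← hx]; ring
  have hmn : 0 ≤ matOpNorm M * ‖x‖ := mul_nonneg (norm_nonneg (LinearMap.toContinuousLinearMap (Matrix.toEuclideanLin M))) (norm_nonneg _)
  have := (pow_le_pow_iff_left₀ (norm_nonneg _) hmn (two_ne_zero)).mp hfinal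
  exact this

def fget {n ℓ : ℕ} (hn : 0 < n) (f : Fin ℓ → Fin n) (k : ℕ) : Fin n :=
  if h : k < ℓ then f ⟨k, h⟩ else ⟨0, hn⟩

variable {n ℓ : ℕ} (hn : 0 < n) (md : ℕ → ℕ)
  (A : (k : ℕ) → Matrix (Fin (md k) × Fin n) (Fin (md (k+1)) × Fin n) ℂ)

def Bm (k : ℕ) : Matrix (Fin (md k) × (Fin ℓ → Fin n)) (Fin (md (k+1)) × (Fin ℓ → Fin n)) ℂ :=
  Matrix.of fun p q => A k (p.1, fget hn p.2 k) (q.1, fget hn q.2 k) *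
    (if ∀ t : Fin ℓ, (t : ℕ) ≠ k → p.2 t = q.2 t then 1 else 0)

def Pm : (k : ℕ) → Matrix (Fin (md 0) × (Fin ℓ → Fin n)) (Fin (md k) × (Fin ℓ → Fin n)) ℂ
  | 0 => 1
  | (k+1) => @HMul.hMul _ _ _ Matrix.instHMulOfFintypeOfMulOfAddCommMonoid (Pm k) (Bm hn md A k)

open Classical in
def S (k : ℕ) (a : Fin (md 0)) (b : Fin (md k)) (f g : Fin ℓ → Fin n) : ℂ :=
  ∑ γ : (s : Fin (k+1)) → Fin (md s), if γ 0 = a ∧ γ (Fin.last k) = b then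
    ∏ s : Fin k, A s (γ s.castSucc, fget hn f s) (γ s.succ, fget hn g s) else 0

lemma S_zero (a b : Fin (md 0)) (f g : Fin ℓ → Fin n) :
    S hn md A 0 a b f g = if a = b then 1 else 0 := by
  rw [S, ← Equiv.sum_comp (Equiv.piUnique (fun s : Fin 1 => Fin (md s))).symm]
  simp only [Finset.univ_eq_empty, Finset.prod_empty, Equiv.piUnique_symm_apply]
  have h0 : ∀ x : Fin (md 0), uniqueElim (α := fun s : Fin 1 => Fin (md ↑s)) x (0 : Fin 1) = x :=
    fun x => rfl
  have h1 : ∀ x : Fin (md 0), uniqueElim (α := fun s : Fin 1 => Fin (md ↑s)) x (Fin.last 0) = x :=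
    fun x => rfl
  simp only [h0, h1]
  by_cases hab : a = b
  · subst hab
    simp
  · rw [if_neg hab]
    apply Finset.sum_eq_zero
    intro x _
    rw [if_neg]
    rintro ⟨rfl, rfl⟩
    exact hab rfl



open Classical in
lemma S_succ (k : ℕ) (a : Fin (md 0)) (b : Fin (md (k+1))) (f g : Fin ℓ → Fin n) :
    S hn md A (k+1) a b f g
      = ∑ c : Fin (md k), S hn md A k a c f g * A k (c, fget hn f k) (b, fget hn g k) := by
  rw [S, ← Equiv.sum_comp (Fin.snocEquiv (fun s : Fin (k+2) => Fin (md s)))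
    (fun γ => if γ 0 = a ∧ γ (Fin.last (k+1)) = b then
      ∏ s : Fin (k+1), A s (γ s.castSucc, fget hn f s) (γ s.succ, fget hn g s) else 0),
    Fintype.sum_prod_type]
  simp only [Fin.snocEquiv_apply, Fin.snoc_last]
  have hz : ∀ (x : Fin (md (k+1))) (y : (i : Fin (k + 1)) → Fin (md ↑i.castSucc)),
      Fin.snoc (α := fun s : Fin (k+2) => Fin (md ↑s)) y x 0 = y 0 := by
    intro x y
    exact Fin.snoc_castSucc (α := fun s : Fin (k+2) => Fin (md ↑s)) (p := y) (x := x) (i := 0)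
  simp only [hz]
  have hprod : ∀ (x : Fin (md (k+1))) (y : (i : Fin (k + 1)) → Fin (md ↑i.castSucc)),
      (∏ s : Fin (k + 1), A ↑s (Fin.snoc (α := fun s : Fin (k+2) => Fin (md ↑s)) y x s.castSucc,
          fget hn f ↑s) (Fin.snoc (α := fun s : Fin (k+2) => Fin (md ↑s)) y x s.succ, fget hn g ↑s))
        = (∏ s : Fin k, A ↑s (y s.castSucc, fget hn f ↑s) (y s.succ, fget hn g ↑s))
            * A k (y (Fin.last k), fget hn f k) (x, fget hn g k) := by
    intro x y
    rw [Fin.prod_univ_castSucc]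
    congr 1
    · refine Finset.prod_congr rfl fun s _ => ?_
      congr 1
      · exact congrArg (fun z => (z, fget hn f ↑s))
          (Fin.snoc_castSucc (α := fun s : Fin (k+2) => Fin (md ↑s)) (p := y) (x := x) (i := s.castSucc))
      · have h1 : Fin.snoc (α := fun s : Fin (k+2) => Fin (md ↑s)) y x (Fin.castSucc s.succ)
            = y s.succ :=
          Fin.snoc_castSucc (α := fun s : Fin (k+2) => Fin (md ↑s)) (p := y) (x := x) (i := s.succ)
        exact congrArg (fun z => (z, fget hn g ↑s)) h1
    · congr 1
      · exact congrArg (fun z => (z, fget hn f ↑(Fin.last k)))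
          (Fin.snoc_castSucc (α := fun s : Fin (k+2) => Fin (md ↑s)) (p := y) (x := x) (i := Fin.last k))
      · have h1 : Fin.snoc (α := fun s : Fin (k+2) => Fin (md ↑s)) y x (Fin.last (k+1)) = x :=
          Fin.snoc_last (α := fun s : Fin (k+2) => Fin (md ↑s)) (p := y) (x := x)
        exact congrArg (fun z => (z, fget hn g k)) h1
  simp only [hprod]
  have LHS' : (∑ x : Fin (md (k+1)), ∑ y : (i : Fin (k + 1)) → Fin (md ↑i.castSucc),
        if y 0 = a ∧ x = b then
          (∏ s : Fin k, A ↑s (y s.castSucc, fget hn f ↑s) (y s.succ, fget hn g ↑s)) *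
            A k (y (Fin.last k), fget hn f k) (x, fget hn g k)
        else 0)
      = ∑ y : (s : Fin (k+1)) → Fin (md ↑s),
          if y 0 = a then
            (∏ s : Fin k, A ↑s (y s.castSucc, fget hn f ↑s) (y s.succ, fget hn g ↑s)) *
              A k (y (Fin.last k), fget hn f k) (b, fget hn g k)
          else 0 := by
    rw [Finset.sum_eq_single b]
    · rw [show ((∑ y : (i : Fin (k + 1)) → Fin (md ↑i.castSucc),
          if y 0 = a ∧ b = b then
            (∏ s : Fin k, A ↑s (y s.castSucc, fget hn f ↑s) (y s.succ, fget hn g ↑s)) *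
              A k (y (Fin.last k), fget hn f k) (b, fget hn g k)
          else 0)) = ∑ y : (i : Fin (k + 1)) → Fin (md ↑i.castSucc),
          if y 0 = a then
            (∏ s : Fin k, A ↑s (y s.castSucc, fget hn f ↑s) (y s.succ, fget hn g ↑s)) *
              A k (y (Fin.last k), fget hn f k) (b, fget hn g k)
          else 0 from Finset.sum_congr rfl fun y _ => by simp only [eq_self_iff_true, and_true]]
      exact Finset.sum_nbij' (fun y => y) (fun y => y) (fun _ _ => Finset.mem_univ _)
        (fun _ _ => Finset.mem_univ _) (fun _ _ => rfl) (fun _ _ => rfl) (fun _ _ => rfl)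
    · intro x _ hxb
      apply Finset.sum_eq_zero
      intro y _
      rw [if_neg]
      rintro ⟨-, rfl⟩
      exact hxb rfl
    · intro h; exact absurd (Finset.mem_univ b) h
  have RHS' : (∑ c : Fin (md k), S hn md A k a c f g * A k (c, fget hn f k) (b, fget hn g k))
      = ∑ y : (s : Fin (k+1)) → Fin (md ↑s),
          if y 0 = a then
            (∏ s : Fin k, A ↑s (y s.castSucc, fget hn f ↑s) (y s.succ, fget hn g ↑s)) *
              A k (y (Fin.last k), fget hn f k) (b, fget hn g k)
          else 0 := by
    simp only [S, Finset.sum_mul, ite_mul, zero_mul]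
    rw [Finset.sum_comm]
    refine Finset.sum_congr rfl fun y _ => ?_
    refine Eq.trans (Finset.sum_eq_single_of_mem (y (Fin.last k)) (Finset.mem_univ _)
      (fun c _ hc => if_neg (fun h => absurd h.2.symm hc))) ?_
    by_cases hy : y 0 = a
    · rw [if_pos ⟨hy, rfl⟩, if_pos hy]
    · rw [if_neg (fun hc => hy hc.1), if_neg hy]
  exact LHS'.trans RHS'.symm

lemma S_congr (k : ℕ) (a : Fin (md 0)) (b : Fin (md k)) (f g₁ g₂ : Fin ℓ → Fin n)
    (h : ∀ t : Fin ℓ, (t : ℕ) < k → g₁ t = g₂ t) :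
    S hn md A k a b f g₁ = S hn md A k a b f g₂ := by
  have hf : ∀ s : Fin k, fget hn g₁ ↑s = fget hn g₂ ↑s := by
    intro s
    unfold fget
    split_ifs with hs
    · exact h ⟨↑s, hs⟩ s.isLt
    · rfl
  simp only [S, hf]

lemma P_entry (k : ℕ) : Pm hn md A k = Matrix.of (fun p q =>
    if ∀ t : Fin ℓ, k ≤ (t : ℕ) → p.2 t = q.2 t then S hn md A k p.1 q.1 p.2 q.2 else 0) := by
  induction k with
  | zero =>
    ext ⟨a, f⟩ ⟨b, g⟩
    rw [Pm, Matrix.one_apply]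
    simp only [Matrix.of_apply, S_zero, Nat.zero_le, true_implies]
    by_cases hfg : f = g
    · subst hfg
      rw [if_pos (fun t => rfl)]
      by_cases hab : a = b
      · subst hab; simp
      · rw [if_neg hab, if_neg (by simp [Prod.ext_iff, hab])]
    · have h1 : ¬((a,f) = (b,g)) := fun h => hfg (congrArg Prod.snd h)
      have h2 : ¬(∀ t : Fin ℓ, f t = g t) := fun h => hfg (funext h)
      rw [if_neg h1, if_neg h2]
  | succ k ih =>
    ext ⟨a, f⟩ ⟨b, g⟩
    rw [Pm, Matrix.mul_apply, ih]
    rw [Fintype.sum_prod_type]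
    simp only [Matrix.of_apply, Bm]
    by_cases hC : ∀ t : Fin ℓ, k + 1 ≤ (t : ℕ) → f t = g t
    · rw [if_pos hC, S_succ]
      refine Finset.sum_congr rfl fun c _ => ?_
      set h₀ : Fin ℓ → Fin n := fun t => if k ≤ (t : ℕ) then f t else g t with hh
      rw [Finset.sum_eq_single h₀]
      · have hc1 : ∀ t : Fin ℓ, k ≤ (t : ℕ) → f t = h₀ t := fun t ht => (if_pos ht).symm
        have hc2 : ∀ t : Fin ℓ, (t : ℕ) ≠ k → h₀ t = g t := by
          intro t ht
          by_cases hkt : k ≤ (t : ℕ)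
          · have : k + 1 ≤ (t : ℕ) := lt_of_le_of_ne hkt (Ne.symm ht)
            rw [hh]; simp only [if_pos hkt]; exact hC t this
          · rw [hh]; simp only [if_neg hkt]
        rw [if_pos hc1, if_pos hc2, mul_one]
        have hS : S hn md A k a c f h₀ = S hn md A k a c f g := by
          apply S_congr
          intro t ht
          rw [hh]
          simp only [if_neg (Nat.not_le.mpr ht)]
        have hfget : fget hn h₀ k = fget hn f k := by
          unfold fget
          split_ifs with hk
          · rw [hh]; simp only [if_pos (le_refl k)]
          · rfl
        rw [hS, hfget]
      · intro h _ hne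
        by_cases hc1 : ∀ t : Fin ℓ, k ≤ (t : ℕ) → f t = h t
        · by_cases hc2 : ∀ t : Fin ℓ, (t : ℕ) ≠ k → h t = g t
          · exfalso
            apply hne
            funext t
            by_cases hkt : k ≤ (t : ℕ)
            · rw [hh]; simp only [if_pos hkt]; exact (hc1 t hkt).symm
            · rw [hh]; simp only [if_neg hkt]
              exact hc2 t (fun hh' => hkt (hh' ▸ le_refl k))
          · rw [if_neg hc2, mul_zero, mul_zero]
        · rw [if_neg hc1, zero_mul]
      · intro h; exact absurd (Finset.mem_univ _) h
    · rw [if_neg hC]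
      apply Finset.sum_eq_zero
      intro c _
      apply Finset.sum_eq_zero
      intro h _
      by_cases hc1 : ∀ t : Fin ℓ, k ≤ (t : ℕ) → f t = h t
      · by_cases hc2 : ∀ t : Fin ℓ, (t : ℕ) ≠ k → h t = g t
        · exfalso
          apply hC
          intro t ht
          have h1 := hc1 t (Nat.le_of_succ_le ht)
          have h2 := hc2 t (fun hh' => by omega)
          exact h1.trans h2
        · rw [if_neg hc2, mul_zero, mul_zero]
      · rw [if_neg hc1, zero_mul]

lemma matOpNorm_nonneg {ι κ : Type*} [Fintype ι] [Fintype κ] [DecidableEq ι] (M : Matrix κ ι ℂ) :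
    0 ≤ matOpNorm M := norm_nonneg _

lemma matOpNorm_mul_le {ι κ σ : Type*} [Fintype ι] [Fintype κ] [Fintype σ]
    [DecidableEq ι] [DecidableEq κ] (M : Matrix σ κ ℂ) (N : Matrix κ ι ℂ) :
    matOpNorm (M * N) ≤ matOpNorm M * matOpNorm N := by
  simp only [matOpNorm_eq_l2]; exact Matrix.l2_opNorm_mul M N

lemma matOpNorm_one_le {ι : Type*} [Fintype ι] [DecidableEq ι] :
    matOpNorm (1 : Matrix ι ι ℂ) ≤ 1 := by
  have : Matrix.toEuclideanLin (1 : Matrix ι ι ℂ) = LinearMap.id := by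
    ext x
    simp [Matrix.toEuclideanLin_apply]
  rw [matOpNorm, this]
  exact ContinuousLinearMap.norm_id_le

variable {n ℓ : ℕ} (hn : 0 < n) (md : ℕ → ℕ)
  (A : (k : ℕ) → Matrix (Fin (md k) × Fin n) (Fin (md (k+1)) × Fin n) ℂ)

def splitEquiv {n ℓ : ℕ} {k : ℕ} (hk : k < ℓ) (m : ℕ) : (Fin m × (Fin ℓ → Fin n))
    ≃ ((Fin m × Fin n) × ({t : Fin ℓ // t ≠ ⟨k, hk⟩} → Fin n)) :=
  ((Equiv.refl (Fin m)).prodCongr (Equiv.funSplitAt (⟨k, hk⟩ : Fin ℓ) (Fin n))).trans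
    (Equiv.prodAssoc _ _ _).symm

lemma Bm_norm (k : ℕ) (hk : k < ℓ) :
    matOpNorm (Bm hn md A (ℓ := ℓ) k) ≤ matOpNorm (A k) := by
  have hB : Bm hn md A (ℓ := ℓ) k
      = (Matrix.of fun (p : (Fin (md k) × Fin n) × ({t : Fin ℓ // t ≠ ⟨k, hk⟩} → Fin n))
          (q : (Fin (md (k+1)) × Fin n) × ({t : Fin ℓ // t ≠ ⟨k, hk⟩} → Fin n)) =>
          A k p.1 q.1 * (if p.2 = q.2 then (1:ℂ) else 0)).submatrix (splitEquiv hk (md k))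
            (splitEquiv hk (md (k+1))) := by
    ext ⟨c, h⟩ ⟨b, g⟩
    simp only [Bm, Matrix.submatrix_apply, Matrix.of_apply, splitEquiv, Equiv.trans_apply,
      Equiv.prodCongr_apply, Equiv.prodAssoc_symm_apply, Equiv.coe_refl, Prod.map,
      id_eq, Equiv.funSplitAt_apply]
    have hfg : fget hn h k = h ⟨k, hk⟩ := dif_pos hk
    have hfg2 : fget hn g k = g ⟨k, hk⟩ := dif_pos hk
    rw [hfg, hfg2]
    congr 1
    apply if_congr _ rfl rfl
    constructor
    · intro hcond
      funext t
      exact hcond t (fun ht => t.2 (Fin.ext ht))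
    · intro hcond t ht
      exact congrFun hcond ⟨t, fun h' => ht (by rw [h'])⟩
  rw [hB, matOpNorm_submatrix]
  exact matOpNorm_kron_one (A k)

lemma Pm_norm : ∀ k : ℕ, k ≤ ℓ →
    matOpNorm (Pm hn md A (ℓ := ℓ) k) ≤ ∏ s ∈ Finset.range k, matOpNorm (A s)
  | 0, _ => by
    rw [Pm, Finset.range_zero, Finset.prod_empty]
    exact matOpNorm_one_le
  | (k+1), hk => by
    rw [Pm, Finset.prod_range_succ]
    calc matOpNorm (Pm hn md A k * Bm hn md A k)
        ≤ matOpNorm (Pm hn md A (ℓ := ℓ) k) * matOpNorm (Bm hn md A (ℓ := ℓ) k) :=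
          matOpNorm_mul_le _ _
      _ ≤ (∏ s ∈ Finset.range k, matOpNorm (A s)) * matOpNorm (A k) :=
          mul_le_mul (Pm_norm k (Nat.le_of_succ_le hk)) (Bm_norm hn md A k hk)
            (matOpNorm_nonneg _) (Finset.prod_nonneg fun s _ => matOpNorm_nonneg _)

def mdOf (ℓ : ℕ) (m : Fin (ℓ+1) → ℕ) : ℕ → ℕ := fun k => if h : k < ℓ + 1 then m ⟨k, h⟩ else 1

lemma mdOf_castSucc {ℓ : ℕ} (m : Fin (ℓ+1) → ℕ) {k : ℕ} (h : k < ℓ) :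
    mdOf ℓ m k = m ((⟨k, h⟩ : Fin ℓ).castSucc) := dif_pos (Nat.lt_succ_of_lt h)

lemma mdOf_succ {ℓ : ℕ} (m : Fin (ℓ+1) → ℕ) {k : ℕ} (h : k < ℓ) :
    mdOf ℓ m (k+1) = m ((⟨k, h⟩ : Fin ℓ).succ) := dif_pos (Nat.succ_lt_succ h)

def AOf (n ℓ : ℕ) (m : Fin (ℓ+1) → ℕ)
    (A : (s : Fin ℓ) → Matrix (Fin (m s.castSucc) × Fin n) (Fin (m s.succ) × Fin n) ℂ)
    (k : ℕ) : Matrix (Fin (mdOf ℓ m k) × Fin n) (Fin (mdOf ℓ m (k+1)) × Fin n) ℂ :=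
  if h : k < ℓ then
    (A ⟨k, h⟩).submatrix (Prod.map (Fin.cast (mdOf_castSucc m h)) id)
      (Prod.map (Fin.cast (mdOf_succ m h)) id)
  else 0

/-- **Haagerup-type norm bound on tensor powers.** If
`A = Σ_γ A^{(1)}_{1,γ_1} ⊗ ⋯ ⊗ A^{(ℓ)}_{γ_{ℓ-1},1}` is assembled from operator-valued
matrices `A^{(s)}` with `m_0 = m_ℓ = 1`, then `‖A‖ ≤ ‖A^{(1)}‖ ⋯ ‖A^{(ℓ)}‖`. -/
theorem kronecker_sum_norm_le
    {n ℓ : ℕ} (hn : 0 < n) (hℓ : 1 ≤ ℓ)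
    (m : Fin (ℓ + 1) → ℕ) (hm0 : m 0 = 1) (hml : m (Fin.last ℓ) = 1)
    (hm : ∀ s, 0 < m s)
    (A : (s : Fin ℓ) →
      Matrix (Fin (m s.castSucc) × Fin n) (Fin (m s.succ) × Fin n) ℂ) :
    matOpNorm
        (Matrix.of fun f g : Fin ℓ → Fin n =>
          ∑ γ : (s : Fin (ℓ + 1)) → Fin (m s),
            ∏ s : Fin ℓ, A s (γ s.castSucc, f s) (γ s.succ, g s)) ≤
      ∏ s : Fin ℓ, matOpNorm (A s) := by
  classical
  set md := mdOf ℓ m with hmddef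
  set A' := AOf n ℓ m A with hA'def
  have h00 : md 0 = 1 := by
    rw [hmddef, mdOf]
    rw [dif_pos (Nat.succ_pos ℓ)]
    rw [show (⟨0, Nat.succ_pos ℓ⟩ : Fin (ℓ+1)) = 0 from Fin.ext rfl]
    exact hm0
  have hll : md ℓ = 1 := by
    rw [hmddef, mdOf]
    rw [dif_pos (Nat.lt_succ_self ℓ)]
    rw [show (⟨ℓ, Nat.lt_succ_self ℓ⟩ : Fin (ℓ+1)) = Fin.last ℓ from rfl]
    exact hml
  have i1 : Subsingleton (Fin (md 0)) := by rw [h00]; infer_instance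
  have i2 : Subsingleton (Fin (md ℓ)) := by rw [hll]; infer_instance
  let eL : (Fin (md 0) × (Fin ℓ → Fin n)) ≃ (Fin ℓ → Fin n) :=
    ((finCongr h00).prodCongr (Equiv.refl (Fin ℓ → Fin n))).trans
      (Equiv.uniqueProd (Fin ℓ → Fin n) (Fin 1))
  let eR : (Fin (md ℓ) × (Fin ℓ → Fin n)) ≃ (Fin ℓ → Fin n) :=
    ((finCongr hll).prodCongr (Equiv.refl (Fin ℓ → Fin n))).trans
      (Equiv.uniqueProd (Fin ℓ → Fin n) (Fin 1))
  have hcast : ∀ s : Fin (ℓ+1), m s = md ↑s := fun s => by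
    rw [hmddef, mdOf, dif_pos s.isLt]
  have hfact : (Matrix.of fun f g : Fin ℓ → Fin n =>
      ∑ γ : (s : Fin (ℓ + 1)) → Fin (m s),
        ∏ s : Fin ℓ, A s (γ s.castSucc, f s) (γ s.succ, g s))
      = (Pm hn md A' (ℓ := ℓ) ℓ).submatrix eL.symm eR.symm := by
    ext f g
    rw [Matrix.submatrix_apply, P_entry]
    simp only [Matrix.of_apply]
    rw [if_pos (fun (t : Fin ℓ) (ht : ℓ ≤ (t : ℕ)) => absurd t.isLt (Nat.not_lt.mpr ht))]
    rw [S, ← Equiv.sum_comp (Equiv.piCongrRight fun s : Fin (ℓ+1) => finCongr (hcast s))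
      (fun γ' : (s : Fin (ℓ+1)) → Fin (md ↑s) =>
        if γ' 0 = (eL.symm f).1 ∧ γ' (Fin.last ℓ) = (eR.symm g).1 then
          ∏ s : Fin ℓ, A' ↑s (γ' s.castSucc, fget hn (eL.symm f).2 ↑s)
            (γ' s.succ, fget hn (eR.symm g).2 ↑s) else 0)]
    refine Finset.sum_congr rfl fun γ _ => ?_
    rw [if_pos ⟨@Subsingleton.elim _ i1 _ _, @Subsingleton.elim _ i2 _ _⟩]
    refine Finset.prod_congr rfl fun s _ => ?_
    have hf : fget hn (eL.symm f).2 ↑s = f s := dif_pos s.isLt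
    have hg : fget hn (eR.symm g).2 ↑s = g s := dif_pos s.isLt
    rw [show A' ↑s = (A ⟨↑s, s.isLt⟩).submatrix
        (Prod.map (Fin.cast (mdOf_castSucc m s.isLt)) id)
        (Prod.map (Fin.cast (mdOf_succ m s.isLt)) id) from dif_pos s.isLt, hf, hg]
    rfl
  have hAnorm : ∀ s : Fin ℓ, matOpNorm (A' ↑s) = matOpNorm (A s) := by
    intro s
    rw [show A' ↑s = (A ⟨↑s, s.isLt⟩).submatrix
        (Prod.map (Fin.cast (mdOf_castSucc m s.isLt)) id)
        (Prod.map (Fin.cast (mdOf_succ m s.isLt)) id) from dif_pos s.isLt]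
    exact matOpNorm_submatrix (A s) ((finCongr (mdOf_castSucc m s.isLt)).prodCongr
      (Equiv.refl (Fin n))) ((finCongr (mdOf_succ m s.isLt)).prodCongr (Equiv.refl (Fin n)))
  calc matOpNorm (Matrix.of fun f g : Fin ℓ → Fin n =>
      ∑ γ : (s : Fin (ℓ + 1)) → Fin (m s),
        ∏ s : Fin ℓ, A s (γ s.castSucc, f s) (γ s.succ, g s))
      = matOpNorm (Pm hn md A' (ℓ := ℓ) ℓ) := by rw [hfact, matOpNorm_submatrix]
    _ ≤ ∏ s ∈ Finset.range ℓ, matOpNorm (A' s) := Pm_norm hn md A' ℓ le_rfl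
    _ = ∏ s : Fin ℓ, matOpNorm (A s) := by
        rw [← Fin.prod_univ_eq_prod_range]
        exact Finset.prod_congr rfl fun s _ => hAnorm s


end MC
end
end
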